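/- Let l be a real number with l ≥ 4. Then each of the four points (1, 2), (1, (2l−4)/l), (l/(3l−4), 2(l−2)/(3l−4)) and ((3l−4)/l, 2(l−2)/l) is a solution of the system v₁ = 0, v₂ = 0, and all four points have both coordinates positive. (These are the singularities at infinity of the normalized Ricci flow on the generalized Wallach space SO(2l)/U(1)×U(l−1).) -/

import Mathlib

/-!
The polynomials factor as `v₁ = 2(l+2) z₁ (z₁ - 1) ((l-2)(z₁+1) - 2(l-1) z₂)` and
`v₂ = (l+2) z₂ Q(z₁, z₂)` with `Q` quadratic. On the line `z₁ = 1` the quadratic `Q` has the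
roots `z₂ = 2` and `z₂ = (2l-4)/l`. On the line `(l-2)(z₁+1) = 2(l-1) z₂` it becomes, up to the
factor `-l / (4(l-1)²)`, the product `((3l-4) z₁ - l) (l z₁ - (3l-4))`, whose reciprocal roots
`l/(3l-4)` and `(3l-4)/l` give the remaining two singular points.
-/

/-- First polynomial of the compactified normalized Ricci flow at infinity for the
generalized Wallach space SO(2l)/U(1)×U(l-1). -/
noncomputable def v₁ (l z₁ z₂ : ℝ) : ℝ :=
  2 * (l + 2) * (z₁ - 1) * z₁ * ((l - 2) * (z₁ + 1) - 2 * (l - 1) * z₂)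

/-- Second polynomial of the compactified normalized Ricci flow at infinity for the
generalized Wallach space SO(2l)/U(1)×U(l-1). -/
noncomputable def v₂ (l z₁ z₂ : ℝ) : ℝ :=
  (l + 2) * z₂ * (l * (-4 * z₁ * z₂ + z₁ * (z₁ + 4) + z₂ ^ 2 - 1)
    - 4 * z₁ * (z₁ - z₂ + 1))

section

variable {l z₁ z₂ : ℝ}

theorem v₁_one_left (l z₂ : ℝ) : v₁ l 1 z₂ = 0 := by
  simp [v₁]

theorem v₂_one_left (l z₂ : ℝ) :
    v₂ l 1 z₂ = (l + 2) * z₂ * (z₂ - 2) * (l * (z₂ - 2) + 4) := by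
  simp only [v₂]; ring

theorem v₁_eq_zero_of_line (h : (l - 2) * (z₁ + 1) = 2 * (l - 1) * z₂) : v₁ l z₁ z₂ = 0 := by
  simp only [v₁, h, sub_self, mul_zero]

theorem v₂_mul_eq_of_line (h : (l - 2) * (z₁ + 1) = 2 * (l - 1) * z₂) :
    4 * (l - 1) ^ 2 * v₂ l z₁ z₂ =
      -(l + 2) * z₂ * l * ((3 * l - 4) * z₁ - l) * (l * z₁ - (3 * l - 4)) := by
  simp only [v₂]
  linear_combination (-(l + 2) * z₂ *
    (2 * l * (l - 1) * z₂ + l * (l - 2) * (z₁ + 1) - 8 * (l - 1) ^ 2 * z₁)) * h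

theorem v₂_eq_zero_of_line (hl : l ≠ 1) (h : (l - 2) * (z₁ + 1) = 2 * (l - 1) * z₂)
    (hz : ((3 * l - 4) * z₁ - l) * (l * z₁ - (3 * l - 4)) = 0) : v₂ l z₁ z₂ = 0 := by
  have hl' : 4 * (l - 1) ^ 2 ≠ 0 := by
    have : l - 1 ≠ 0 := sub_ne_zero.mpr hl
    positivity
  refine (mul_eq_zero.mp ?_).resolve_left hl'
  rw [v₂_mul_eq_of_line h]
  linear_combination (-(l + 2) * z₂ * l) * hz

end

theorem wallach_so2l_four_singularities (l : ℝ) (hl : 4 ≤ l) :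
    (v₁ l 1 2 = 0 ∧ v₂ l 1 2 = 0 ∧ (0 : ℝ) < 1 ∧ (0 : ℝ) < 2) ∧
    (v₁ l 1 ((2 * l - 4) / l) = 0 ∧ v₂ l 1 ((2 * l - 4) / l) = 0 ∧
      (0 : ℝ) < 1 ∧ 0 < (2 * l - 4) / l) ∧
    (v₁ l (l / (3 * l - 4)) (2 * (l - 2) / (3 * l - 4)) = 0 ∧
      v₂ l (l / (3 * l - 4)) (2 * (l - 2) / (3 * l - 4)) = 0 ∧
      0 < l / (3 * l - 4) ∧ 0 < 2 * (l - 2) / (3 * l - 4)) ∧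
    (v₁ l ((3 * l - 4) / l) (2 * (l - 2) / l) = 0 ∧
      v₂ l ((3 * l - 4) / l) (2 * (l - 2) / l) = 0 ∧
      0 < (3 * l - 4) / l ∧ 0 < 2 * (l - 2) / l) := by
  have hl₀ : 0 < l := by linarith
  have hk₀ : 0 < 3 * l - 4 := by linarith
  have hm₀ : 0 < l - 2 := by linarith
  have hl₀' := hl₀.ne'
  have hk₀' := hk₀.ne'
  have hl₁ : l ≠ 1 := by linarith
  have line₃ : (l - 2) * (l / (3 * l - 4) + 1) = 2 * (l - 1) * (2 * (l - 2) / (3 * l - 4)) := by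
    rw [div_add_one hk₀', mul_div_assoc', mul_div_assoc', div_left_inj' hk₀']
    ring
  have line₄ : (l - 2) * ((3 * l - 4) / l + 1) = 2 * (l - 1) * (2 * (l - 2) / l) := by
    field_simp; ring
  refine ⟨⟨v₁_one_left l 2, by rw [v₂_one_left]; ring, one_pos, two_pos⟩,
    ⟨v₁_one_left l _, ?_, one_pos, div_pos (by linarith) hl₀⟩,
    ⟨v₁_eq_zero_of_line line₃, v₂_eq_zero_of_line hl₁ line₃ ?_, by positivity, by positivity⟩,
    ⟨v₁_eq_zero_of_line line₄, v₂_eq_zero_of_line hl₁ line₄ ?_, by positivity, by positivity⟩⟩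
  · rw [v₂_one_left]
    field_simp
    ring
  · field_simp; ring
  · field_simp; ring
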